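/- Let F be a finite field with q = |F| elements, K a finite field extension of F, and L an intermediate field with F ⊆ L ⊆ K of degree l over F. Let p₁, ..., p_s ∈ K[X] be linearized polynomials and let E be the F-span of all their coefficients, with r = dim_F E. For each i let b_i, S_i ∈ K[X] be linearized polynomials with all coefficients in L, and let h ∈ K[X] be a nonzero linearized polynomial with all coefficients in L. Let R be the right remainder of Σ_{i=1}^{s} p_i ∘ S_i ∘ b_i under right division by h. Then every coefficient of R lies in the product space E·L (the F-span of {e·t : e ∈ E, t ∈ L}), and consequently the F-dimension of the F-span of the coefficients of R is at most r·l. -/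

import Mathlib

open Polynomial

/-- A polynomial over `K` is linearized (a `q`-polynomial) if every exponent in
its support is a power of `q`. -/
def IsLinearized (q : ℕ) {K : Type*} [Semiring K] (p : K[X]) : Prop :=
  ∀ n ∈ p.support, ∃ i : ℕ, n = q ^ i

/-- When the moduli data have coefficients in an intermediate field `L` of
`F`-degree `l`, the right remainder `R` of `Σ_i p_i ∘ S_i ∘ b_i` by `h` has
all coefficients in the product space `E·L`, where `E` is the `F`-span of the
coefficients of the `p_i` of dimension `r`; consequently the `F`-dimension of
the support of `R` is at most `r·l`. -/
theorem supp_crt_lifting_prod_space (F K : Type*) [Field F] [Fintype F]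
    [Field K] [Fintype K] [Algebra F K]
    (q : ℕ) (hq : q = Fintype.card F) (s : ℕ)
    (L : IntermediateField F K) (l : ℕ) (hl : Module.finrank F L = l)
    (p b S : Fin s → K[X]) (h R : K[X])
    (E : Submodule F K) (hE : E = Submodule.span F (⋃ i, Set.range (p i).coeff))
    (r : ℕ) (hr : Module.finrank F E = r)
    (hp : ∀ i, IsLinearized q (p i))
    (hb : ∀ i, IsLinearized q (b i)) (hS : ∀ i, IsLinearized q (S i))
    (hbL : ∀ i n, (b i).coeff n ∈ L)
    (hSL : ∀ i n, (S i).coeff n ∈ L)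
    (hh : IsLinearized q h) (hh0 : h ≠ 0)
    (hhL : ∀ n, h.coeff n ∈ L)
    (hR : IsLinearized q R)
    (hrem : ∃ Q : K[X], IsLinearized q Q ∧
      ∑ i, (p i).comp ((S i).comp (b i)) = Q.comp h + R)
    (hRdeg : R.degree < h.degree) :
    (∀ n, R.coeff n ∈
      Submodule.span F (Set.image2 (· * ·) (E : Set K) (L : Set K))) ∧
    Module.finrank F (Submodule.span F (Set.range R.coeff)) ≤ r * l := by
  classical
  obtain ⟨Q, hQlin, hQeq⟩ := hrem
  set φ : ↥L →+* K := algebraMap ↥L K with hφdef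
  have hφ : ∀ x : ↥L, φ x = (x : K) := fun x => rfl
  have hsmulL : ∀ (t : ↥L) (x : K), t • x = (t : K) * x := fun t x => rfl
  -- the L-span of E
  set N : Submodule ↥L K := Submodule.span ↥L (E : Set K) with hNdef
  set M : Submodule F K :=
    Submodule.span F (Set.image2 (· * ·) (E : Set K) (L : Set K)) with hMdef
  -- lifting polynomials with coefficients in L
  have hlift : ∀ g : K[X], (∀ n, g.coeff n ∈ L) → g ∈ Polynomial.lifts φ := by
    intro g hg
    rw [Polynomial.lifts_iff_coeff_lifts]
    intro n
    exact ⟨⟨g.coeff n, hg n⟩, rfl⟩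
  set A := ∑ i, (p i).comp ((S i).comp (b i)) with hAdef
  have hEsub : ∀ i k, (p i).coeff k ∈ E := fun i k =>
    hE ▸ Submodule.subset_span (Set.mem_iUnion.2 ⟨i, Set.mem_range_self k⟩)
  have hTL : ∀ (i : Fin s) (k n : ℕ), ((((S i).comp (b i))) ^ k).coeff n ∈ L := by
    intro i k n
    obtain ⟨b', hb'⟩ := (Polynomial.mem_lifts _).1 (hlift _ (hbL i))
    obtain ⟨S', hS'⟩ := (Polynomial.mem_lifts _).1 (hlift _ (hSL i))
    have : ((S i).comp (b i)) ^ k = Polynomial.map φ ((S'.comp b') ^ k) := by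
      rw [Polynomial.map_pow, Polynomial.map_comp, hb', hS']
    rw [this, Polynomial.coeff_map, hφ]
    exact SetLike.coe_mem _
  have hAco : ∀ n, A.coeff n ∈ N := by
    intro n
    rw [hAdef, Polynomial.finset_sum_coeff]
    refine Submodule.sum_mem _ fun i _ => ?_
    rw [Polynomial.comp_eq_sum_left, Polynomial.sum, Polynomial.finset_sum_coeff]
    refine Submodule.sum_mem _ fun k _ => ?_
    rw [Polynomial.coeff_C_mul]
    have h2 := hTL i k n
    have key : (p i).coeff k * ((((S i).comp (b i))) ^ k).coeff n
        = (⟨_, h2⟩ : ↥L) • ((p i).coeff k) := by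
      rw [hsmulL]; ring
    rw [key]
    exact N.smul_mem _ (Submodule.subset_span (hEsub i k))
  -- monicization of h
  set c := h.leadingCoeff with hcdef
  have hc0 : c ≠ 0 := leadingCoeff_ne_zero.2 hh0
  set h₁ : K[X] := h * C c⁻¹ with h₁def
  have hmono : h₁.Monic := monic_mul_leadingCoeff_inv hh0
  have hdeg1 : h₁.degree = h.degree := by
    rw [h₁def, degree_mul, degree_C (inv_ne_zero hc0), add_zero]
  have hh₁L : ∀ n, h₁.coeff n ∈ L := by
    intro n
    rw [h₁def, Polynomial.coeff_mul_C]
    exact L.mul_mem (hhL n) (L.inv_mem (hhL h.natDegree))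
  -- Q has zero constant coefficient
  have hQ0 : Q.coeff 0 = 0 := by
    by_contra h0
    obtain ⟨i, hi⟩ := hQlin 0 (Polynomial.mem_support_iff.2 h0)
    have hqpos : 0 < q := hq ▸ Fintype.card_pos
    have : 0 < q ^ i := pow_pos hqpos i
    omega
  obtain ⟨Q₂, hQ₂⟩ := Polynomial.X_dvd_iff.2 hQ0
  have hcompfac : Q.comp h = h * Q₂.comp h := by
    rw [hQ₂, Polynomial.mul_comp, Polynomial.X_comp]
  -- R is the remainder of A modulo h₁
  have hrem' : A %ₘ h₁ = R := by
    refine (Polynomial.div_modByMonic_unique (C c * Q₂.comp h) R hmono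
      ⟨?_, by rwa [hdeg1]⟩).2
    have key : h₁ * (C c * Q₂.comp h) = h * Q₂.comp h := by
      rw [h₁def, mul_assoc, ← mul_assoc (C c⁻¹), ← Polynomial.C_mul,
        inv_mul_cancel₀ hc0, Polynomial.C_1, one_mul]
    rw [key, hQeq, hcompfac, add_comm]
  -- lift h₁ to L[X]
  obtain ⟨h₂, hmap₂, hdeg₂, hmon₂⟩ :=
    Polynomial.lifts_and_degree_eq_and_monic (hlift h₁ hh₁L) hmono
  -- the generators behave well under %ₘ h₁
  have hgen : ∀ e ∈ E, ∀ m n : ℕ, ((C e * X ^ m) %ₘ h₁).coeff n ∈ N := by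
    intro e he m n
    have hCe : (C e * X ^ m : K[X]) = e • (X ^ m : K[X]) := by
      rw [Polynomial.smul_eq_C_mul]
    rw [hCe, Polynomial.smul_modByMonic, Polynomial.coeff_smul, smul_eq_mul]
    have hXm : (X ^ m : K[X]) %ₘ h₁ = Polynomial.map φ ((X ^ m : (↥L)[X]) %ₘ h₂) := by
      rw [Polynomial.map_modByMonic φ hmon₂, hmap₂, Polynomial.map_pow, Polynomial.map_X]
    have hℓ : ((X ^ m : K[X]) %ₘ h₁).coeff n ∈ L := by
      rw [hXm, Polynomial.coeff_map, hφ]; exact SetLike.coe_mem _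
    have key : e * ((X ^ m : K[X]) %ₘ h₁).coeff n
        = (⟨_, hℓ⟩ : ↥L) • e := by rw [hsmulL]; ring
    rw [key]
    exact N.smul_mem _ (Submodule.subset_span he)
  -- any polynomial with coefficients in N has remainder with coefficients in N
  have hmod : ∀ g : K[X], (∀ n, g.coeff n ∈ N) → ∀ n, (g %ₘ h₁).coeff n ∈ N := by
    intro g hg
    set Sgen : Set K[X] := {f | ∃ e ∈ (E : Set K), ∃ m : ℕ, f = C e * X ^ m} with hSgen
    have hgspan : g ∈ Submodule.span ↥L Sgen := by
      rw [g.as_sum_support]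
      refine Submodule.sum_mem _ fun m _ => ?_
      refine Submodule.span_induction
        (p := fun x _ => ((Polynomial.monomial m x : K[X]) ∈ Submodule.span ↥L Sgen))
        ?_ ?_ ?_ ?_ (hg m)
      · intro x hx
        exact Submodule.subset_span ⟨x, hx, m, (Polynomial.C_mul_X_pow_eq_monomial).symm⟩
      · simp
      · intro x y _ _ hx hy
        rw [map_add]
        exact Submodule.add_mem _ hx hy
      · intro t x _ hx
        rw [← Polynomial.smul_monomial]
        exact Submodule.smul_mem _ t hx
    intro n
    refine Submodule.span_induction
      (p := fun f _ => ∀ n, ((f %ₘ h₁).coeff n ∈ N)) ?_ ?_ ?_ ?_ hgspan n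
    · rintro f ⟨e, he, m, rfl⟩ n
      exact hgen e he m n
    · intro n; simp [Polynomial.zero_modByMonic]
    · intro x y _ _ hx hy n
      rw [Polynomial.add_modByMonic, Polynomial.coeff_add]
      exact Submodule.add_mem _ (hx n) (hy n)
    · intro t x _ hx n
      have : t • x = (t : K) • x := by
        ext k; rw [Polynomial.coeff_smul, Polynomial.coeff_smul, hsmulL, smul_eq_mul]
      rw [this, Polynomial.smul_modByMonic, Polynomial.coeff_smul, smul_eq_mul,
        ← hsmulL]
      exact N.smul_mem _ (hx n)
  have hRN : ∀ n, R.coeff n ∈ N := fun n => hrem' ▸ hmod A hAco n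
  -- N ⊆ M
  have hNM : ∀ x ∈ N, x ∈ M := by
    intro x hx
    refine Submodule.span_induction (p := fun x _ => x ∈ M) ?_ ?_ ?_ ?_ hx
    · intro e he
      exact Submodule.subset_span ⟨e, he, 1, L.one_mem, mul_one e⟩
    · exact Submodule.zero_mem _
    · intro x y _ _ hx hy; exact Submodule.add_mem _ hx hy
    · intro t x _ hx
      refine Submodule.span_induction (p := fun y _ => t • y ∈ M) ?_ ?_ ?_ ?_ hx
      · rintro y ⟨a, ha, bb, hbb, rfl⟩
        refine Submodule.subset_span ⟨a, ha, (t : K) * bb, L.mul_mem t.2 hbb, ?_⟩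
        rw [hsmulL]; ring
      · simp
      · intro u v _ _ hu hv; rw [smul_add]; exact Submodule.add_mem _ hu hv
      · intro cc u _ hu
        have : t • cc • u = cc • t • u := by
          rw [hsmulL, hsmulL, mul_smul_comm]
        rw [this]
        exact Submodule.smul_mem _ cc hu
  have part1 : ∀ n, R.coeff n ∈ M := fun n => hNM _ (hRN n)
  refine ⟨part1, ?_⟩
  -- dimension bound
  have : Finite K := inferInstance
  have hfin : FiniteDimensional F K := Module.Finite.of_finite
  have hsub : Submodule.span F (Set.range R.coeff) ≤ M := by
    rw [Submodule.span_le]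
    rintro x ⟨n, rfl⟩
    exact part1 n
  haveI : Module.Finite F E := inferInstance
  haveI : Module.Finite F ↥L := inferInstance
  let bE := Module.finBasisOfFinrankEq F E hr
  let bL := Module.finBasisOfFinrankEq F ↥L hl
  set g : Fin r × Fin l → K := fun ij => (bE ij.1 : K) * (bL ij.2 : K) with hgdef
  have hMle : M ≤ Submodule.span F (Set.range g) := by
    rw [hMdef, Submodule.span_le]
    rintro x ⟨a, ha, t, ht, rfl⟩
    have hae : a = ∑ i, bE.repr ⟨a, ha⟩ i • ((bE i : K)) := by
      have h1 := bE.sum_repr ⟨a, ha⟩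
      have h2 := congrArg (Submodule.subtype E) h1
      simp only [map_sum, map_smul] at h2
      exact h2.symm
    have hte : t = ∑ j, bL.repr ⟨t, ht⟩ j • ((bL j : K)) := by
      have h1 := bL.sum_repr ⟨t, ht⟩
      have h2 := congrArg (L.val) h1
      simp only [map_sum, map_smul] at h2
      exact h2.symm
    show a * t ∈ _
    rw [hae, hte, Finset.sum_mul]
    refine Submodule.sum_mem _ fun i _ => ?_
    rw [smul_mul_assoc, Finset.mul_sum]
    refine Submodule.smul_mem _ _ (Submodule.sum_mem _ fun j _ => ?_)
    rw [mul_smul_comm]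
    exact Submodule.smul_mem _ _ (Submodule.subset_span ⟨(i, j), rfl⟩)
  have hcard : Module.finrank F (Submodule.span F (Set.range g)) ≤ r * l := by
    have := finrank_range_le_card (R := F) g
    rw [Set.finrank] at this
    simpa using this
  exact le_trans (Submodule.finrank_mono (le_trans hsub hMle)) hcard
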